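/- Let ρ₀ and ρ₁ be states on a finite-dimensional system, let P be a matrix with 0 ≤ P ≤ 1, and define p_j(+) := Tr[ρ_j P] and p_j(−) := Tr[ρ_j(1−P)] for j = 0, 1, and ‖p₀−p₁‖₁ := |p₀(+)−p₁(+)| + |p₀(−)−p₁(−)|. Suppose δ > 0 satisfies |½‖p₀−p₁‖₁ − ½(Tr[(ρ₀−ρ₁)₊] + Tr[(ρ₀−ρ₁)₋])| ≤ δ, and suppose p₀(+) ≥ p₁(+). Then Tr[(1−P)(ρ₀−ρ₁)₊] + Tr[P(ρ₀−ρ₁)₋] ≤ δ. -/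

import Mathlib

open scoped Kronecker
open Matrix
open scoped ComplexOrder Classical

noncomputable section

/-- Positive semidefinite square root of a matrix (junk value `0` if not PSD). -/
noncomputable def matSqrt {n : Type*} [Fintype n] [DecidableEq n]
    (A : Matrix n n ℂ) : Matrix n n ℂ :=
  if h : A.PosSemidef then
    (h.1.eigenvectorUnitary : Matrix n n ℂ) *
      Matrix.diagonal ((↑) ∘ Real.sqrt ∘ h.1.eigenvalues) *
      (star h.1.eigenvectorUnitary : Matrix n n ℂ)
  else 0

/-- A quantum state: a positive semidefinite matrix of unit trace. -/
def IsState {n : Type*} [Fintype n] [DecidableEq n] (ρ : Matrix n n ℂ) : Prop :=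
  ρ.PosSemidef ∧ ρ.trace = 1

/-- Fidelity `F(ρ,σ) = Tr √(√σ ρ √σ)`. -/
noncomputable def fidelity {n : Type*} [Fintype n] [DecidableEq n]
    (ρ σ : Matrix n n ℂ) : ℝ :=
  ((matSqrt (matSqrt σ * ρ * matSqrt σ)).trace).re

/-- Purified distance `D_F(ρ,σ) = √(1 − F(ρ,σ)²)`. -/
noncomputable def purifiedDist {n : Type*} [Fintype n] [DecidableEq n]
    (ρ σ : Matrix n n ℂ) : ℝ :=
  Real.sqrt (1 - (fidelity ρ σ) ^ 2)

/-- SLD quantum Fisher information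
`𝔉_ρ(X) = 2 ∑_{i,j : λ_i+λ_j>0} ((λ_i−λ_j)²/(λ_i+λ_j)) |⟨i|X|j⟩|²`
(junk value `0` if `ρ` is not Hermitian). -/
noncomputable def qFisher {n : Type*} [Fintype n] [DecidableEq n]
    (ρ X : Matrix n n ℂ) : ℝ :=
  if hρ : ρ.IsHermitian then
    2 * ∑ i, ∑ j,
      (if 0 < hρ.eigenvalues i + hρ.eigenvalues j then
        ((hρ.eigenvalues i - hρ.eigenvalues j) ^ 2 / (hρ.eigenvalues i + hρ.eigenvalues j)) *
          Complex.normSq (dotProduct (star ⇑(hρ.eigenvectorBasis i))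
            (X *ᵥ ⇑(hρ.eigenvectorBasis j)))
      else 0)
  else 0

/-- Positive part of a Hermitian matrix (junk value `0` if not Hermitian). -/
noncomputable def matPosPart {n : Type*} [Fintype n] [DecidableEq n]
    (W : Matrix n n ℂ) : Matrix n n ℂ :=
  if hW : W.IsHermitian then
    (hW.eigenvectorUnitary : Matrix n n ℂ) *
      Matrix.diagonal (fun i => ((max (hW.eigenvalues i) 0 : ℝ) : ℂ)) *
      star (hW.eigenvectorUnitary : Matrix n n ℂ)
  else 0

/-- Negative part of a Hermitian matrix (junk value `0` if not Hermitian). -/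
noncomputable def matNegPart {n : Type*} [Fintype n] [DecidableEq n]
    (W : Matrix n n ℂ) : Matrix n n ℂ :=
  if hW : W.IsHermitian then
    (hW.eigenvectorUnitary : Matrix n n ℂ) *
      Matrix.diagonal (fun i => ((max (-hW.eigenvalues i) 0 : ℝ) : ℂ)) *
      star (hW.eigenvectorUnitary : Matrix n n ℂ)
  else 0

/-- `Δ_W`: difference between the largest and smallest eigenvalues of a Hermitian matrix. -/
noncomputable def specSpread {n : Type*} [Fintype n] [DecidableEq n]
    (W : Matrix n n ℂ) : ℝ :=
  if hW : W.IsHermitian then (⨆ i, hW.eigenvalues i) - (⨅ i, hW.eigenvalues i) else 0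

/-- Trace distance `T(ρ,σ) = ½(Tr (ρ−σ)₊ + Tr (ρ−σ)₋)`. -/
noncomputable def traceDist {n : Type*} [Fintype n] [DecidableEq n]
    (ρ σ : Matrix n n ℂ) : ℝ :=
  (((matPosPart (ρ - σ)).trace).re + ((matNegPart (ρ - σ)).trace).re) / 2

/-- The dual (adjoint w.r.t. the trace pairing) of a linear map on matrices:
`Tr[(dualMap Φ W) ρ] = Tr[W Φ(ρ)]` for all `ρ` whenever `Φ` is linear. -/
noncomputable def dualMap {n m : Type*} [Fintype n] [DecidableEq n] [Fintype m] [DecidableEq m]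
    (Φ : Matrix n n ℂ → Matrix m m ℂ) (W : Matrix m m ℂ) : Matrix n n ℂ :=
  Matrix.of fun i j => (W * Φ (Matrix.single j i 1)).trace

/-- Partial trace over the second tensor factor. -/
def ptraceRight {α β : Type*} [Fintype β] (M : Matrix (α × β) (α × β) ℂ) : Matrix α α ℂ :=
  Matrix.of fun i j => ∑ k, M (i, k) (j, k)

/-- Partial trace over the first tensor factor. -/
def ptraceLeft {α β : Type*} [Fintype α] (M : Matrix (α × β) (α × β) ℂ) : Matrix β β ℂ :=
  Matrix.of fun i j => ∑ k, M (k, i) (k, j)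

/-- A quantum channel: a map admitting a Kraus representation `{K_μ}` with
`∑_μ K_μ† K_μ = 1` (this entails complete positivity, trace preservation and linearity). -/
def IsCPTP {n m : Type*} [Fintype n] [DecidableEq n] [Fintype m] [DecidableEq m]
    (Φ : Matrix n n ℂ → Matrix m m ℂ) : Prop :=
  ∃ (N : ℕ) (K : Fin N → Matrix m n ℂ),
    (∀ ρ, Φ ρ = ∑ μ, K μ * ρ * (K μ)ᴴ) ∧ (∑ μ, (K μ)ᴴ * K μ = 1)

/-- Tensor extension `Φ ⊗ id` of a map on matrices (correct for linear `Φ`). -/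
noncomputable def tensorId {a b r : Type*} [Fintype a] [DecidableEq a]
    [Fintype b] [DecidableEq b] [Fintype r]
    (Φ : Matrix a a ℂ → Matrix b b ℂ)
    (M : Matrix (a × r) (a × r) ℂ) : Matrix (b × r) (b × r) ℂ :=
  Matrix.of fun p q => Φ (Matrix.of fun i j => M (i, p.2) (j, q.2)) p.1 q.1

/-- Operator norm (ℓ²→ℓ²) of a matrix, as a supremum over unit vectors. -/
noncomputable def opNorm {n : Type*} [Fintype n] (M : Matrix n n ℂ) : ℝ :=
  sSup {x : ℝ | ∃ v : n → ℂ, (∑ i, Complex.normSq (v i)) = 1 ∧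
    x = Real.sqrt (∑ i, Complex.normSq ((M *ᵥ v) i))}

end

section

variable {n : Type*} [Fintype n]

theorem trace_mul_sub_trace_mul (ρ₀ ρ₁ P : Matrix n n ℂ) :
    (ρ₀ * P).trace - (ρ₁ * P).trace = (P * (ρ₀ - ρ₁)).trace := by
  rw [Matrix.trace_mul_comm ρ₀, Matrix.trace_mul_comm ρ₁, ← Matrix.trace_sub, Matrix.mul_sub]

variable [DecidableEq n]

theorem matPosPart_sub_matNegPart {W : Matrix n n ℂ} (hW : W.IsHermitian) :
    matPosPart W - matNegPart W = W := by
  rw [matPosPart, matNegPart, dif_pos hW, dif_pos hW]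
  conv_rhs => rw [hW.spectral_theorem]
  rw [← Matrix.sub_mul, ← Matrix.mul_sub, Matrix.diagonal_sub]
  congr 3
  funext i
  rw [← Complex.ofReal_sub, max_zero_sub_max_neg_zero_eq_self]
  rfl

theorem trace_matNegPart_eq_trace_matPosPart {W : Matrix n n ℂ} (hW : W.IsHermitian)
    (htr : W.trace = 0) : (matNegPart W).trace = (matPosPart W).trace := by
  have h := congrArg Matrix.trace (matPosPart_sub_matNegPart hW)
  rw [Matrix.trace_sub, htr, sub_eq_zero] at h
  exact h.symm

theorem trace_one_sub_mul_matPosPart_add_trace_mul_matNegPart {W : Matrix n n ℂ}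
    (hW : W.IsHermitian) (P : Matrix n n ℂ) :
    ((1 - P) * matPosPart W).trace + (P * matNegPart W).trace
      = (matPosPart W).trace - (P * W).trace := by
  have hPW : P * W = P * matPosPart W - P * matNegPart W := by
    rw [← Matrix.mul_sub, matPosPart_sub_matNegPart hW]
  rw [hPW, Matrix.sub_mul, Matrix.one_mul, Matrix.trace_sub, Matrix.trace_sub]
  ring

theorem trace_mul_one_sub_sub_trace_mul_one_sub {ρ₀ ρ₁ : Matrix n n ℂ}
    (htr : ρ₀.trace = ρ₁.trace) (P : Matrix n n ℂ) :
    (ρ₀ * (1 - P)).trace - (ρ₁ * (1 - P)).trace = -(P * (ρ₀ - ρ₁)).trace := by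
  rw [Matrix.mul_sub, Matrix.mul_sub, Matrix.mul_one, Matrix.mul_one, Matrix.trace_sub,
    Matrix.trace_sub, htr, ← trace_mul_sub_trace_mul]
  ring

end

theorem statement_14_general
    {n : Type*} [Fintype n] [DecidableEq n]
    (ρ₀ ρ₁ : Matrix n n ℂ) (h₀ : IsState ρ₀) (h₁ : IsState ρ₁)
    (P : Matrix n n ℂ)
    (δ : ℝ)
    (happrox :
      |(|((ρ₀ * P).trace.re - (ρ₁ * P).trace.re)|
          + |((ρ₀ * (1 - P)).trace.re - (ρ₁ * (1 - P)).trace.re)|) / 2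
        - ((matPosPart (ρ₀ - ρ₁)).trace.re + (matNegPart (ρ₀ - ρ₁)).trace.re) / 2| ≤ δ)
    (hord : (ρ₁ * P).trace.re ≤ (ρ₀ * P).trace.re) :
    ((1 - P) * matPosPart (ρ₀ - ρ₁)).trace.re + (P * matNegPart (ρ₀ - ρ₁)).trace.re ≤ δ := by
  have hW : (ρ₀ - ρ₁).IsHermitian := h₀.1.1.sub h₁.1.1
  have htr : ρ₀.trace = ρ₁.trace := h₀.2.trans h₁.2.symm
  have hplus := congrArg Complex.re (trace_mul_sub_trace_mul ρ₀ ρ₁ P)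
  have hminus := congrArg Complex.re (trace_mul_one_sub_sub_trace_mul_one_sub htr P)
  have hneg := congrArg Complex.re
    (trace_matNegPart_eq_trace_matPosPart hW (by rw [Matrix.trace_sub, htr, sub_self]))
  have herr := congrArg Complex.re (trace_one_sub_mul_matPosPart_add_trace_mul_matNegPart hW P)
  simp only [Complex.sub_re, Complex.neg_re, Complex.add_re] at hplus hminus herr
  -- with `hord`, the measured distance is `Tr[P(ρ₀ - ρ₁)]` and the trace distance is `Tr[(ρ₀ - ρ₁)₊]`
  have hPW : 0 ≤ (P * (ρ₀ - ρ₁)).trace.re := by linarith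
  rw [hplus, hminus, abs_neg, abs_of_nonneg hPW, hneg] at happrox
  rw [herr]
  linarith [(abs_le.mp happrox).1]

/-- if a two-outcome measurement nearly achieves the trace distance and is
correctly ordered, its misidentification probabilities are small. -/
theorem statement_14
    {n : Type*} [Fintype n] [DecidableEq n]
    (ρ₀ ρ₁ : Matrix n n ℂ) (h₀ : IsState ρ₀) (h₁ : IsState ρ₁)
    (P : Matrix n n ℂ) (hP0 : P.PosSemidef) (hP1 : ((1 : Matrix n n ℂ) - P).PosSemidef)
    (δ : ℝ) (hδpos : 0 < δ)
    (happrox :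
      |(|((ρ₀ * P).trace.re - (ρ₁ * P).trace.re)|
          + |((ρ₀ * (1 - P)).trace.re - (ρ₁ * (1 - P)).trace.re)|) / 2
        - ((matPosPart (ρ₀ - ρ₁)).trace.re + (matNegPart (ρ₀ - ρ₁)).trace.re) / 2| ≤ δ)
    (hord : (ρ₁ * P).trace.re ≤ (ρ₀ * P).trace.re) :
    ((1 - P) * matPosPart (ρ₀ - ρ₁)).trace.re + (P * matNegPart (ρ₀ - ρ₁)).trace.re ≤ δ :=
  statement_14_general ρ₀ ρ₁ h₀ h₁ P δ happrox hord
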